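/- arXiv:1610.09612 — 3 statements merged into one kernel-verified Lean document; each statement's English description precedes it below -/
import Mathlib

section
/- The assignment g1 -> (1 3), g2 -> (2 3), g3 -> (3 4), g3' -> (3 4), g4 -> (4 5) respects all the defining relations of G_V and hence extends to a group homomorphism phi : G_V -> S_5, and this homomorphism is surjective. -/
namespace Stmt1

/-- Generators: `0 ↦ g1`, `1 ↦ g2`, `2 ↦ g3`, `3 ↦ g3'`, `4 ↦ g4`. -/
def g (i : Fin 5) : FreeGroup (Fin 5) := FreeGroup.of i

/-- The braid relator `x y x (y x y)⁻¹`, i.e. `<x,y> = e`. -/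
def braid (x y : FreeGroup (Fin 5)) : FreeGroup (Fin 5) := x * y * x * (y * x * y)⁻¹

/-- The commutator relator `x y x⁻¹ y⁻¹`, i.e. `[x,y] = e`. -/
def comm (x y : FreeGroup (Fin 5)) : FreeGroup (Fin 5) := x * y * x⁻¹ * y⁻¹

/-- Relators of the group `G_V` from Theorem 3.3 (union of the Veronese surface `V₂`
and a plane).  Here `g 0 = g1`, `g 1 = g2`, `g 2 = g3`, `g 3 = g3'`, `g 4 = g4`. -/
def rels : Set (FreeGroup (Fin 5)) :=
  { (g 0) ^ 2, (g 1) ^ 2, (g 2) ^ 2, (g 3) ^ 2, (g 4) ^ 2,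
    braid (g 0) (g 1),
    braid (g 1) ((g 2)⁻¹ * (g 3)⁻¹ * g 0 * g 3 * g 2),
    braid (g 1) (g 3 * g 2 * g 0 * (g 2)⁻¹ * (g 3)⁻¹),
    braid (g 1) (g 3),
    braid (g 1) (g 3 * g 2 * (g 3)⁻¹),
    braid (g 1) (g 3 * g 2 * g 3 * (g 2)⁻¹ * (g 3)⁻¹),
    braid (g 0) (g 3),
    braid (g 0) (g 3 * g 2 * (g 3)⁻¹),
    braid (g 0) (g 3 * g 2 * g 3 * (g 2)⁻¹ * (g 3)⁻¹),
    braid (g 4) (g 3),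
    braid (g 4) (g 3 * g 2 * (g 3)⁻¹),
    braid (g 4) (g 3 * g 2 * g 3 * (g 2)⁻¹ * (g 3)⁻¹),
    comm (g 0) (g 4), comm (g 1) (g 4), comm (g 3 * g 2) (g 4),
    (g 1 * (g 2)⁻¹ * (g 3)⁻¹ * g 0 * g 3 * g 2 * g 0 * g 1 * (g 0)⁻¹ * (g 2)⁻¹ * (g 3)⁻¹
        * (g 0)⁻¹ * g 3 * g 2 * (g 1)⁻¹)
      * ((g 2)⁻¹ * (g 3)⁻¹ * g 1 * g 3 * g 2)⁻¹,
    (g 4) ^ 2 * g 1 * g 3 * g 2 * g 1 * (g 2)⁻¹ * (g 3)⁻¹ * g 0 * g 3 * g 2 * g 0 }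

/-- The presented group `G_V`. -/
abbrev GV := PresentedGroup rels

open Equiv

theorem _root_.MonoidHom.surjective_of_swap_castSucc_succ_mem_range {G : Type*} [Group G] {n : ℕ}
    (f : G →* Perm (Fin (n + 1))) (h : ∀ i : Fin n, swap i.castSucc i.succ ∈ f.range) :
    Function.Surjective f := by
  rw [← MonoidHom.range_eq_top, eq_top_iff,
    ← Subgroup.closure_eq_top_of_mclosure_eq_top (Perm.mclosure_swap_castSucc_succ n),
    Subgroup.closure_le]
  rintro _ ⟨i, rfl⟩
  exact h i

/-- The paper's `(1 3), (2 3), (3 4), (3 4), (4 5)`, with the points `1, …, 5` renamed `0, …, 4`. -/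
def transpositionImage : Fin 5 → Perm (Fin 5) :=
  ![swap 0 2, swap 1 2, swap 2 3, swap 2 3, swap 3 4]

theorem lift_transpositionImage_eq_one_of_mem_rels :
    ∀ r ∈ rels, FreeGroup.lift transpositionImage r = 1 := by
  simp only [rels, Set.forall_mem_insert, Set.mem_singleton_iff, forall_eq, g, braid, comm, map_mul, map_inv,
    map_pow, FreeGroup.lift_apply_of]
  decide

def phi : GV →* Perm (Fin 5) := PresentedGroup.toGroup lift_transpositionImage_eq_one_of_mem_rels

theorem phi_of (i : Fin 5) : phi (PresentedGroup.of i) = transpositionImage i :=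
  PresentedGroup.toGroup.of _

theorem phi_surjective : Function.Surjective phi := by
  refine phi.surjective_of_swap_castSucc_succ_mem_range fun i ↦ ?_
  fin_cases i
  · -- `swap 0 1 = swap 0 2 * swap 1 2 * swap 0 2`
    refine ⟨.of 0 * .of 1 * .of 0, ?_⟩
    rw [map_mul, map_mul, phi_of, phi_of]
    decide
  · exact ⟨.of 1, phi_of 1⟩
  · exact ⟨.of 2, phi_of 2⟩
  · exact ⟨.of 4, phi_of 4⟩

/-- Theorem 3.3 (first step): the assignment `g1 ↦ (1 3)`, `g2 ↦ (2 3)`, `g3 ↦ (3 4)`,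
`g3' ↦ (3 4)`, `g4 ↦ (4 5)` extends to a group homomorphism `φ : G_V → S₅`, which is
surjective. -/
theorem exists_surjective_hom :
    ∃ φ : GV →* Equiv.Perm (Fin 5),
      φ (PresentedGroup.of 0) = Equiv.swap 0 2 ∧
      φ (PresentedGroup.of 1) = Equiv.swap 1 2 ∧
      φ (PresentedGroup.of 2) = Equiv.swap 2 3 ∧
      φ (PresentedGroup.of 3) = Equiv.swap 2 3 ∧
      φ (PresentedGroup.of 4) = Equiv.swap 3 4 ∧
      Function.Surjective φ :=
  ⟨phi, phi_of 0, phi_of 1, phi_of 2, phi_of 3, phi_of 4, phi_surjective⟩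

end Stmt1
end

section
/- The assignment g1 -> (1 2), g1' -> (1 2), g2 -> (1 3), g3 -> (2 3), g4 -> (2 4), g5 -> (1 5) respects all the defining relations of G_I and hence extends to a group homomorphism rho : G_I -> S_5, and this homomorphism is surjective. -/
/-!
Each defining relation of `G_I` becomes a finite identity among transpositions of `S₅`, checked
by computation, so the assignment defines `ρ`. Its image contains `(1 2)`, `(1 3)`, `(1 5)` and
`(1 4) = (2 4)(1 2)(2 4)`, i.e. all transpositions through `1`, and these generate `S₅`.
(Points are numbered as in the paper; in `Fin 5` they are shifted down by one.)
-/

namespace Stmt4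

/-- Generators: `0 ↦ g1`, `1 ↦ g1'`, `2 ↦ g2`, `3 ↦ g3`, `4 ↦ g4`, `5 ↦ g5`. -/
def g (i : Fin 6) : FreeGroup (Fin 6) := FreeGroup.of i

/-- The braid relator `x y x (y x y)⁻¹`, i.e. `<x,y> = e`. -/
def braid (x y : FreeGroup (Fin 6)) : FreeGroup (Fin 6) := x * y * x * (y * x * y)⁻¹

/-- The commutator relator `x y x⁻¹ y⁻¹`, i.e. `[x,y] = e`. -/
def comm (x y : FreeGroup (Fin 6)) : FreeGroup (Fin 6) := x * y * x⁻¹ * y⁻¹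

/-- Relators of the group `G_I` from Theorem 3.4 (union of the Cayley cubic degeneration
and two planes, Type I).  Here `g 0 = g1`, `g 1 = g1'`, `g 2 = g2`, `g 3 = g3`,
`g 4 = g4`, `g 5 = g5`. -/
def rels : Set (FreeGroup (Fin 6)) :=
  { (g 0) ^ 2, (g 1) ^ 2, (g 2) ^ 2, (g 3) ^ 2, (g 4) ^ 2, (g 5) ^ 2,
    comm (g 2) (g 4), comm (g 3) (g 5), comm (g 4) (g 5),
    braid (g 0) (g 2), braid (g 0) (g 4), braid (g 0) (g 5),
    braid (g 1) (g 2), braid (g 1) (g 4), braid (g 1) (g 5),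
    braid (g 2) (g 3), braid (g 2) (g 5), braid (g 3) (g 4),
    comm (g 0) ((g 2)⁻¹ * g 3 * g 2), comm (g 1) ((g 2)⁻¹ * g 3 * g 2) }

/-- The presented group `G_I`. -/
abbrev GI := PresentedGroup rels

end Stmt4

open Equiv

theorem Equiv.Perm.eq_top_of_forall_swap_mem {α : Type*} [Finite α] [DecidableEq α]
    (H : Subgroup (Perm α)) (a : α) (h : ∀ x, swap a x ∈ H) : H = ⊤ := by
  rw [eq_top_iff, ← Perm.closure_isSwap, Subgroup.closure_le]
  rintro _ ⟨x, y, -, rfl⟩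
  exact SubmonoidClass.swap_mem_trans H (swap_comm a x ▸ h x) (h y)

namespace Stmt4

def genImage : Fin 6 → Perm (Fin 5) :=
  ![swap 0 1, swap 0 1, swap 0 2, swap 1 2, swap 1 3, swap 0 4]

theorem lift_genImage_eq_one_of_mem_rels : ∀ r ∈ rels, FreeGroup.lift genImage r = 1 := by
  simp only [rels, Set.forall_mem_insert, Set.mem_singleton_iff, forall_eq, g, braid, comm,
    map_mul, map_inv, map_pow, FreeGroup.lift_apply_of]
  decide

/-- Theorem 3.4 (first step): the assignment `g1 ↦ (1 2)`, `g1' ↦ (1 2)`, `g2 ↦ (1 3)`,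
`g3 ↦ (2 3)`, `g4 ↦ (2 4)`, `g5 ↦ (1 5)` extends to a group homomorphism
`ρ : G_I → S₅`, which is surjective. -/
theorem exists_surjective_hom :
    ∃ ρ : GI →* Equiv.Perm (Fin 5),
      ρ (PresentedGroup.of 0) = Equiv.swap 0 1 ∧
      ρ (PresentedGroup.of 1) = Equiv.swap 0 1 ∧
      ρ (PresentedGroup.of 2) = Equiv.swap 0 2 ∧
      ρ (PresentedGroup.of 3) = Equiv.swap 1 2 ∧
      ρ (PresentedGroup.of 4) = Equiv.swap 1 3 ∧
      ρ (PresentedGroup.of 5) = Equiv.swap 0 4 ∧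
      Function.Surjective ρ := by
  let ρ : GI →* Perm (Fin 5) := PresentedGroup.toGroup lift_genImage_eq_one_of_mem_rels
  have hρ (i : Fin 6) : ρ (PresentedGroup.of i) = genImage i := PresentedGroup.toGroup.of _
  have mem (i : Fin 6) : genImage i ∈ ρ.range := ⟨_, hρ i⟩
  refine ⟨ρ, hρ 0, hρ 1, hρ 2, hρ 3, hρ 4, hρ 5, ?_⟩
  rw [← MonoidHom.range_eq_top]
  refine Perm.eq_top_of_forall_swap_mem _ 0 fun x => ?_
  fin_cases x
  · show swap (0 : Fin 5) 0 ∈ ρ.range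
    rw [swap_self]
    exact one_mem _
  · exact mem 0
  · exact mem 2
  · exact SubmonoidClass.swap_mem_trans _ (mem 0) (mem 4)
  · exact mem 5

end Stmt4
end

section
/- Let Q be the presented group defined in the context (arising from the 4-point quintic degeneration, Theorem 3.8). Then Q is isomorphic to the symmetric group S_5. (Consequently, in the paper's setting, the fundamental group of the Galois cover of a surface with a 4-point quintic degeneration is trivial.) -/
namespace Stmt12

/-- Generators: `i ↦ g(i+1)` for `i = 0,…,3`. -/
def g (i : Fin 4) : FreeGroup (Fin 4) := FreeGroup.of i

/-- The braid relator `x y x (y x y)⁻¹`, i.e. `<x,y> = e`. -/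
def braid (x y : FreeGroup (Fin 4)) : FreeGroup (Fin 4) := x * y * x * (y * x * y)⁻¹

/-- The commutator relator `x y x⁻¹ y⁻¹`, i.e. `[x,y] = e`. -/
def comm (x y : FreeGroup (Fin 4)) : FreeGroup (Fin 4) := x * y * x⁻¹ * y⁻¹

/-- Relators of the group `Q` from Theorem 3.8 (the 4-point quintic degeneration). -/
def rels : Set (FreeGroup (Fin 4)) :=
  { (g 0) ^ 2, (g 1) ^ 2, (g 2) ^ 2, (g 3) ^ 2,
    comm (g 0) (g 2), comm (g 1) (g 2), comm (g 1 * g 0 * g 1) (g 3),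
    braid (g 0) (g 1), braid (g 1) (g 3), braid (g 2) (g 3) }

/-- The presented group `Q`. -/
abbrev Q := PresentedGroup rels

/-!
Put `s₀ = g₂ g₁ g₂`, `s₁ = g₂`, `s₂ = g₄`, `s₃ = g₃`. The defining relations of `Q` say exactly
that these are involutions satisfying the Coxeter relations of type `A₄` (the relation
`[g₂ g₁ g₂, g₄] = e` is `[s₀, s₂] = e`), and they generate `Q` because `g₁ = s₁ s₀ s₁`.
For any such family, coset enumeration shows that `⟨s₀, …, sₙ⟩` is the union of the `n + 2`
right cosets of `⟨s₀, …, sₙ₋₁⟩` represented by `sₙ sₙ₋₁ ⋯ s_k`, `0 ≤ k ≤ n + 1`; hence `|Q| ≤ 5!`.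
The assignment `g₁ ↦ (0 2)`, `g₂ ↦ (1 2)`, `g₃ ↦ (3 4)`, `g₄ ↦ (2 3)` respects the relations and
sends `sᵢ` to `(i i+1)`, so it defines a surjection `Q → S₅`, which is then an isomorphism.
-/

open Subgroup Equiv
open scoped Nat Pointwise

section CoxeterTypeA

variable {G : Type*} [Group G]

theorem closure_subset_mul_of_forall_mul_mem {H : Subgroup G} {S T : Set G}
    (hS : ∀ x ∈ S, x * x = 1) (hT₁ : (1 : G) ∈ T)
    (hT : ∀ t ∈ T, ∀ x ∈ S, t * x ∈ (H : Set G) * T) :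
    (closure S : Set G) ⊆ (H : Set G) * T := by
  have step : ∀ y ∈ (H : Set G) * T, ∀ x ∈ S, y * x ∈ (H : Set G) * T := by
    intro y hy x hx
    obtain ⟨h, hh, t, ht, rfl⟩ := Set.mem_mul.mp hy
    obtain ⟨h', hh', t', ht', he⟩ := Set.mem_mul.mp (hT t ht x hx)
    exact Set.mem_mul.mpr ⟨h * h', H.mul_mem hh hh', t', ht', by rw [mul_assoc, he, mul_assoc]⟩
  intro y hy
  induction hy using closure_induction_right with
  | one => exact Set.mem_mul.mpr ⟨1, H.one_mem, 1, hT₁, one_mul 1⟩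
  | mul_right y _ x hx ih => exact step y ih x hx
  | mul_inv_cancel y _ x hx ih =>
    rw [inv_eq_of_mul_eq_one_right (hS x hx)]
    exact step y ih x hx

structure IsCoxeterTypeA (n : ℕ) (s : ℕ → G) : Prop where
  mul_self : ∀ i < n, s i * s i = 1
  braid : ∀ i, i + 1 < n → s i * s (i + 1) * s i = s (i + 1) * s i * s (i + 1)
  commute : ∀ i j, i + 2 ≤ j → j < n → Commute (s i) (s j)

def descProd (s : ℕ → G) (i : ℕ) : ℕ → G
  | 0 => 1
  | m + 1 => s (i + m) * descProd s i m

variable {s : ℕ → G}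

theorem descProd_add (i l m : ℕ) :
    descProd s i (l + m) = descProd s (i + l) m * descProd s i l := by
  induction m with
  | zero => simp [descProd]
  | succ m ih => rw [← add_assoc, descProd, ih, descProd, mul_assoc, add_assoc]

theorem commute_descProd {x : G} {i m : ℕ} (h : ∀ r, i ≤ r → r < i + m → Commute x (s r)) :
    Commute x (descProd s i m) := by
  induction m with
  | zero => exact Commute.one_right x
  | succ m ih =>
    exact (h (i + m) (by omega) (by omega)).mul_right (ih fun r h₁ h₂ => h r h₁ (by omega))

def cosetReps (s : ℕ → G) (n : ℕ) : Set G :=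
  Set.range fun k : Fin (n + 2) => descProd s k (n + 1 - k)

theorem descProd_mem_cosetReps {n k m : ℕ} (h : k + m = n + 1) :
    descProd s k m ∈ cosetReps s n :=
  ⟨⟨k, by omega⟩, by simp only; congr; omega⟩

theorem one_mem_cosetReps (n : ℕ) : (1 : G) ∈ cosetReps s n :=
  descProd_mem_cosetReps (k := n + 1) (m := 0) rfl

namespace IsCoxeterTypeA

variable {N : ℕ} (hs : IsCoxeterTypeA N s)
include hs

theorem descProd_mul_eq_mul_descProd {k l p : ℕ} (h : k + l + 2 + p ≤ N) :
    descProd s k (l + 2 + p) * s (k + l + 1) = s (k + l) * descProd s k (l + 2 + p) := by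
  have hlow : Commute (s (k + l + 1)) (descProd s k l) :=
    commute_descProd fun r h₁ h₂ => (hs.commute r _ (by omega) (by omega)).symm
  have htop : Commute (s (k + l)) (descProd s (k + (l + 2)) p) :=
    commute_descProd fun r h₁ h₂ => hs.commute _ r (by omega) (by omega)
  rw [descProd_add, descProd, descProd]
  set T := descProd s (k + (l + 2)) p
  set L := descProd s k l
  calc T * (s (k + (l + 1)) * (s (k + l) * L)) * s (k + l + 1)
      = T * (s (k + l + 1) * s (k + l)) * (s (k + l + 1) * L) := by
        simp only [mul_assoc, ← add_assoc]; rw [hlow.eq]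
    _ = T * (s (k + l) * s (k + l + 1) * s (k + l)) * L := by
        rw [hs.braid (k + l) (by omega)]; simp only [mul_assoc]
    _ = s (k + l) * (T * (s (k + l + 1) * (s (k + l) * L))) := by
        simp only [← mul_assoc]; rw [htop.eq]

theorem descProd_mul_mem_closure_mul_cosetReps {n k m j : ℕ} (hn : n < N) (hkm : k + m = n + 1)
    (hj : j ≤ n) :
    descProd s k m * s j ∈ (closure (s '' Set.Iio n) : Set G) * cosetReps s n := by
  have gen_mem : ∀ i < n, s i ∈ closure (s '' Set.Iio n) := fun i hi =>
    subset_closure ⟨i, hi, rfl⟩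
  rcases lt_trichotomy j k with hjk | rfl | hkj
  · obtain rfl | hjk := (Nat.succ_le_of_lt hjk).eq_or_lt
    · refine Set.mem_mul.mpr
        ⟨1, one_mem _, descProd s j (m + 1), descProd_mem_cosetReps (by omega), ?_⟩
      rw [one_mul, add_comm m, descProd_add]
      simp [descProd]
    · have : Commute (s j) (descProd s k m) :=
        commute_descProd fun r h₁ h₂ => hs.commute j r (by omega) (by omega)
      exact Set.mem_mul.mpr
        ⟨s j, gen_mem j (by omega), descProd s k m, descProd_mem_cosetReps hkm, this.eq⟩
  · obtain ⟨m, rfl⟩ : ∃ m', m = m' + 1 := ⟨m - 1, by omega⟩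
    refine Set.mem_mul.mpr
      ⟨1, one_mem _, descProd s (j + 1) m, descProd_mem_cosetReps (by omega), ?_⟩
    rw [one_mul, add_comm m, descProd_add]
    simp [descProd, mul_assoc, hs.mul_self j (by omega)]
  · obtain ⟨l, rfl⟩ : ∃ l, j = k + l + 1 := ⟨j - k - 1, by omega⟩
    obtain ⟨p, rfl⟩ : ∃ p, m = l + 2 + p := ⟨m - l - 2, by omega⟩
    exact Set.mem_mul.mpr ⟨s (k + l), gen_mem _ (by omega), descProd s k (l + 2 + p),
      descProd_mem_cosetReps hkm, (hs.descProd_mul_eq_mul_descProd (by omega)).symm⟩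

theorem closure_succ_subset {n : ℕ} (hn : n < N) :
    (closure (s '' Set.Iio (n + 1)) : Set G) ⊆
      (closure (s '' Set.Iio n) : Set G) * cosetReps s n := by
  refine closure_subset_mul_of_forall_mul_mem ?_ (one_mem_cosetReps n) ?_
  · rintro _ ⟨j, hj : j < n + 1, rfl⟩
    exact hs.mul_self j (by omega)
  · rintro _ ⟨k, rfl⟩ _ ⟨j, hj : j < n + 1, rfl⟩
    exact hs.descProd_mul_mem_closure_mul_cosetReps hn (by omega) (by omega)

theorem finite_and_card_closure_le {n : ℕ} (hn : n ≤ N) :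
    (closure (s '' Set.Iio n) : Set G).Finite ∧
      Nat.card (closure (s '' Set.Iio n) : Set G) ≤ (n + 1)! := by
  induction n with
  | zero => simp
  | succ n ih =>
    obtain ⟨hfin, hcard⟩ := ih (by omega)
    have hsub := hs.closure_succ_subset (n := n) (by omega)
    have hreps : Nat.card (cosetReps s n) ≤ n + 2 :=
      (Finite.card_range_le _).trans (by simp)
    refine ⟨(hfin.mul (Set.finite_range _)).subset hsub, ?_⟩
    calc Nat.card (closure (s '' Set.Iio (n + 1)) : Set G)
        ≤ Nat.card ((closure (s '' Set.Iio n) : Set G) * cosetReps s n) :=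
          Nat.card_mono (hfin.mul (Set.finite_range _)) hsub
      _ ≤ (n + 1)! * (n + 2) :=
          Set.natCard_mul_le.trans (Nat.mul_le_mul hcard hreps)
      _ = (n + 2)! := by rw [Nat.factorial_succ (n + 1), mul_comm]

theorem bijective_of_map_eq_swap (hgen : closure (s '' Set.Iio N) = ⊤)
    (f : G →* Perm (Fin (N + 1))) (hf : ∀ i : Fin N, f (s i) = swap i.castSucc i.succ) :
    Function.Bijective f := by
  obtain ⟨hfin, hcard⟩ := hs.finite_and_card_closure_le le_rfl
  rw [hgen, coe_top, Set.finite_univ_iff] at hfin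
  rw [hgen, coe_top, Nat.card_univ] at hcard
  have hsurj : Function.Surjective f := by
    rw [← MonoidHom.range_eq_top, eq_top_iff, ← closure_eq_top_of_mclosure_eq_top
      (Perm.mclosure_swap_castSucc_succ N), closure_le]
    rintro _ ⟨i, rfl⟩
    exact ⟨s i, hf i⟩
  refine (Nat.bijective_iff_surjective_and_card f).mpr ⟨hsurj, le_antisymm ?_ ?_⟩
  · simpa [Nat.card_eq_fintype_card, Fintype.card_perm] using hcard
  · exact Nat.card_le_card_of_surjective f hsurj

end IsCoxeterTypeA

end CoxeterTypeA

theorem mk_mul_self_of_sq_mem {α : Type*} {R : Set (FreeGroup α)} {x : FreeGroup α}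
    (h : x ^ 2 ∈ R) : PresentedGroup.mk R x * PresentedGroup.mk R x = 1 := by
  rw [← map_mul, ← sq]
  exact PresentedGroup.one_of_mem h

theorem mk_commute_of_comm_mem {R : Set (FreeGroup (Fin 4))} {x y : FreeGroup (Fin 4)}
    (h : comm x y ∈ R) : Commute (PresentedGroup.mk R x) (PresentedGroup.mk R y) := by
  have := PresentedGroup.one_of_mem h
  rwa [comm, map_mul, map_mul, map_mul, map_inv, map_inv, mul_inv_eq_one,
    mul_inv_eq_iff_eq_mul] at this

theorem mk_braid_of_braid_mem {R : Set (FreeGroup (Fin 4))} {x y : FreeGroup (Fin 4)}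
    (h : braid x y ∈ R) :
    PresentedGroup.mk R x * PresentedGroup.mk R y * PresentedGroup.mk R x =
      PresentedGroup.mk R y * PresentedGroup.mk R x * PresentedGroup.mk R y := by
  have := PresentedGroup.one_of_mem h
  rwa [braid, map_mul, map_inv, mul_inv_eq_one] at this

abbrev g₁ : Q := PresentedGroup.of 0
abbrev g₂ : Q := PresentedGroup.of 1
abbrev g₃ : Q := PresentedGroup.of 2
abbrev g₄ : Q := PresentedGroup.of 3

theorem of_mul_self (i : Fin 4) : (PresentedGroup.of i : Q) * PresentedGroup.of i = 1 :=
  mk_mul_self_of_sq_mem (x := g i) (by fin_cases i <;> simp [rels])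

theorem of_mul_of_mul (i : Fin 4) (y : Q) :
    PresentedGroup.of i * (PresentedGroup.of i * y) = y := by
  rw [← mul_assoc, of_mul_self, one_mul]

theorem commute_g₁_g₃ : Commute g₁ g₃ :=
  mk_commute_of_comm_mem (x := g 0) (y := g 2) (by simp [rels])

theorem commute_g₂_g₃ : Commute g₂ g₃ :=
  mk_commute_of_comm_mem (x := g 1) (y := g 2) (by simp [rels])

theorem commute_g₂g₁g₂_g₄ : Commute (g₂ * g₁ * g₂) g₄ := by
  have := mk_commute_of_comm_mem (R := rels) (x := g 1 * g 0 * g 1) (y := g 3) (by simp [rels])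
  rwa [map_mul, map_mul] at this

theorem braid_g₁_g₂ : g₁ * g₂ * g₁ = g₂ * g₁ * g₂ :=
  mk_braid_of_braid_mem (x := g 0) (y := g 1) (by simp [rels])

theorem braid_g₂_g₄ : g₂ * g₄ * g₂ = g₄ * g₂ * g₄ :=
  mk_braid_of_braid_mem (x := g 1) (y := g 3) (by simp [rels])

theorem braid_g₃_g₄ : g₃ * g₄ * g₃ = g₄ * g₃ * g₄ :=
  mk_braid_of_braid_mem (x := g 2) (y := g 3) (by simp [rels])

def coxeterGen : ℕ → Q
  | 0 => g₂ * g₁ * g₂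
  | 1 => g₂
  | 2 => g₄
  | _ => g₃

theorem isCoxeterTypeA_coxeterGen : IsCoxeterTypeA 4 coxeterGen where
  mul_self i hi := by
    interval_cases i
    · simp only [coxeterGen, mul_assoc]
      rw [of_mul_of_mul 1, of_mul_of_mul 0, of_mul_self]
    all_goals exact of_mul_self _
  braid i hi := by
    obtain rfl | rfl | rfl : i = 0 ∨ i = 1 ∨ i = 2 := by omega
    · simp only [coxeterGen, ← mul_assoc]
      rw [← braid_g₁_g₂]
      simp only [mul_assoc]
      rw [of_mul_of_mul 1, of_mul_of_mul 0, of_mul_of_mul 1]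
    · exact braid_g₂_g₄
    · exact braid_g₃_g₄.symm
  commute i j hij hj := by
    obtain ⟨rfl, rfl⟩ | ⟨rfl, rfl⟩ | ⟨rfl, rfl⟩ :
        i = 0 ∧ j = 2 ∨ i = 0 ∧ j = 3 ∨ i = 1 ∧ j = 3 := by omega
    · exact commute_g₂g₁g₂_g₄
    · exact (commute_g₂_g₃.mul_left commute_g₁_g₃).mul_left commute_g₂_g₃
    · exact commute_g₂_g₃

theorem closure_coxeterGen_eq_top : closure (coxeterGen '' Set.Iio 4) = ⊤ := by
  have mem : ∀ i < 4, coxeterGen i ∈ closure (coxeterGen '' Set.Iio 4) :=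
    fun i hi => subset_closure ⟨i, hi, rfl⟩
  rw [eq_top_iff, ← PresentedGroup.closure_range_of, closure_le]
  rintro _ ⟨i, rfl⟩
  fin_cases i
  · show g₁ ∈ _
    have : g₁ = g₂ * coxeterGen 0 * g₂ := by
      simp only [coxeterGen, mul_assoc]
      rw [of_mul_self, mul_one, of_mul_of_mul]
    rw [this]
    exact mul_mem (mul_mem (mem 1 (by norm_num)) (mem 0 (by norm_num))) (mem 1 (by norm_num))
  · exact mem 1 (by norm_num)
  · exact mem 3 (by norm_num)
  · exact mem 2 (by norm_num)

def toPerm : Q →* Perm (Fin 5) :=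
  PresentedGroup.toGroup (f := ![swap 0 2, swap 1 2, swap 3 4, swap 2 3]) (by
    intro r hr
    simp only [rels, Set.mem_insert_iff, Set.mem_singleton_iff] at hr
    rcases hr with rfl | rfl | rfl | rfl | rfl | rfl | rfl | rfl | rfl | rfl <;>
      (simp only [g, braid, comm, map_mul, map_inv, map_pow, FreeGroup.lift_apply_of]; decide))

theorem toPerm_coxeterGen (i : Fin 4) : toPerm (coxeterGen i) = swap i.castSucc i.succ := by
  fin_cases i <;> (simp only [coxeterGen, toPerm, map_mul, PresentedGroup.toGroup.of]; decide)

/-- Theorem 3.8 (group-theoretic content): `Q ≅ S₅`. -/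
theorem Q_iso_S5 : Nonempty (Q ≃* Equiv.Perm (Fin 5)) :=
  ⟨MulEquiv.ofBijective toPerm
    (isCoxeterTypeA_coxeterGen.bijective_of_map_eq_swap closure_coxeterGen_eq_top toPerm
      toPerm_coxeterGen)⟩

end Stmt12
end
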